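/- Let V be a finite set, let w' : V × V → ℝ be a symmetric function with w'(u,u) = 0, and define Q(u,u) = ∑_{v} w'(u,v) and Q(u,v) = −w'(u,v) for u ≠ v. Then an assignment x : V → {0,1} maximizes the QUBO objective ∑_{u,v} Q(u,v) x(u) x(v) over all assignments y : V → {0,1} if and only if the corresponding subset S = {u : x(u) = 1} maximizes the cut weight ∑_{u,v} w'(u,v) y(u)(1 − y(v)) over all assignments y : V → {0,1}. -/
import Mathlib

lemma qubo_eq_cut
    {V : Type*} [Fintype V] [DecidableEq V] (w' : V → V → ℝ)
    (hdiag : ∀ u, w' u u = 0)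
    (Q : V → V → ℝ)
    (hQdiag : ∀ u, Q u u = ∑ v : V, w' u v)
    (hQoff : ∀ u v, u ≠ v → Q u v = -w' u v)
    (y : V → ℝ) (hy : ∀ u, y u = 0 ∨ y u = 1) :
    ∑ u : V, ∑ v : V, Q u v * y u * y v =
      ∑ u : V, ∑ v : V, w' u v * y u * (1 - y v) := by
  have hyy : ∀ u, y u * y u = y u := fun u => by rcases hy u with h | h <;> simp [h]
  refine Finset.sum_congr rfl fun u _ => ?_
  have h1 : Q u u * y u * y u + ∑ v ∈ Finset.univ.erase u, Q u v * y u * y v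
      = ∑ v : V, Q u v * y u * y v :=
    Finset.add_sum_erase Finset.univ (fun v => Q u v * y u * y v) (Finset.mem_univ u)
  have h2 : ∑ v ∈ Finset.univ.erase u, Q u v * y u * y v
      = ∑ v ∈ Finset.univ.erase u, -(w' u v * y u * y v) := by
    refine Finset.sum_congr rfl fun v hv => ?_
    rw [hQoff u v (Ne.symm (Finset.ne_of_mem_erase hv))]; ring
  have h3 : ∑ v ∈ Finset.univ.erase u, -(w' u v * y u * y v)
      = ∑ v : V, -(w' u v * y u * y v) := by
    rw [← Finset.add_sum_erase Finset.univ (fun v => -(w' u v * y u * y v)) (Finset.mem_univ u), hdiag u]; ring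
  calc ∑ v : V, Q u v * y u * y v
      = Q u u * y u * y u + ∑ v ∈ Finset.univ.erase u, Q u v * y u * y v := h1.symm
    _ = (∑ v : V, w' u v) * y u + ∑ v : V, -(w' u v * y u * y v) := by
        rw [h2, h3, hQdiag u, mul_assoc, hyy u]
    _ = ∑ v : V, (w' u v * y u + -(w' u v * y u * y v)) := by
        rw [Finset.sum_add_distrib, Finset.sum_mul]
    _ = ∑ v : V, w' u v * y u * (1 - y v) :=
        Finset.sum_congr rfl fun v _ => by ring

/-- With the QUBO matrix `Q` built from the symmetric weight
function `w'` (diagonal `∑ v, w' u v`, off-diagonal `-w' u v`), a binary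
assignment `x` maximizes the QUBO objective over all binary assignments iff
it maximizes the cut weight over all binary assignments. -/
theorem qubo_maximizer_iff_cut_maximizer
    {V : Type*} [Fintype V] [DecidableEq V] (w' : V → V → ℝ)
    (hsymm : ∀ u v, w' u v = w' v u)
    (hdiag : ∀ u, w' u u = 0)
    (Q : V → V → ℝ)
    (hQdiag : ∀ u, Q u u = ∑ v : V, w' u v)
    (hQoff : ∀ u v, u ≠ v → Q u v = -w' u v)
    (x : V → ℝ) (hx : ∀ u, x u = 0 ∨ x u = 1) :
    (∀ y : V → ℝ, (∀ u, y u = 0 ∨ y u = 1) →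
        ∑ u : V, ∑ v : V, Q u v * y u * y v ≤
          ∑ u : V, ∑ v : V, Q u v * x u * x v) ↔
    (∀ y : V → ℝ, (∀ u, y u = 0 ∨ y u = 1) →
        ∑ u : V, ∑ v : V, w' u v * y u * (1 - y v) ≤
          ∑ u : V, ∑ v : V, w' u v * x u * (1 - x v)) := by
  constructor <;> intro h y hy <;>
    have hq := qubo_eq_cut w' hdiag Q hQdiag hQoff y hy <;>
    have hqx := qubo_eq_cut w' hdiag Q hQdiag hQoff x hx
  · rw [← hq, ← hqx]; exact h y hy
  · rw [hq, hqx]; exact h y hy
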